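/- Let K be a field, α ∈ K((T)), and p, q, r ∈ K[X] with q ≠ 0 and r ≠ 0. Assume orderTop(ι p − α·ι q) > deg r + deg q. Then (r·p, r·q) is a best approximation of α: for all p', q' ∈ K[X] with q' ≠ 0, if orderTop(ι p' − α·ι q') ≥ orderTop(ι(r·p) − α·ι(r·q)) and deg q' ≤ deg(r·q), then p'·(r·q) = (r·p)·q'. In particular (taking r = 1), every convergent of α is a best approximation of α. -/

import Mathlib

/-!
Write `E = ι p - α ι q` and `E' = ι p' - α ι q'`. Then
`ι (p' q - p q') = ι q · E' - ι q' · E`, and both products have positive order as soon as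
`ord E' > deg q` and `ord E > deg q'`; a nonzero polynomial, however, has order `-deg ≤ 0`,
so `p' q = p q'`. Passing from `(p, q)` to `(r p, r q)` multiplies `E` by `ι r`, which lowers
the order by at most `deg r`: this is what the hypothesis `ord E > deg r + deg q` pays for.
-/

open Polynomial

/-- The ring homomorphism `K[X] → K((T))` sending `X` to `T⁻¹`. -/
noncomputable def iota {K : Type*} [Field K] : Polynomial K →+* LaurentSeries K :=
  Polynomial.eval₂RingHom (HahnSeries.C : K →+* LaurentSeries K)
    (HahnSeries.single (-1 : ℤ) (1 : K))

section

variable {K : Type*} [Field K]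

theorem iota_monomial (n : ℕ) (a : K) : iota (monomial n a) = HahnSeries.single (-(n : ℤ)) a := by
  simp [iota, HahnSeries.single_pow]

theorem coeff_iota_neg_natCast (f : K[X]) (m : ℕ) : (iota f).coeff (-(m : ℤ)) = f.coeff m := by
  induction f using Polynomial.induction_on' with
  | add f g hf hg => simp [hf, hg]
  | monomial n a => simp [iota_monomial, HahnSeries.coeff_single, coeff_monomial, eq_comm]

theorem neg_natDegree_le_orderTop_iota (f : K[X]) :
    ((-f.natDegree : ℤ) : WithTop ℤ) ≤ (iota f).orderTop := by
  refine HahnSeries.le_orderTop_iff_forall.mpr fun j hj => ?_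
  have hj : j < -(f.natDegree : ℤ) := by exact_mod_cast hj
  obtain ⟨m, rfl⟩ : ∃ m : ℕ, j = -(m : ℤ) := ⟨(-j).toNat, by omega⟩
  rw [coeff_iota_neg_natCast]
  exact coeff_eq_zero_of_natDegree_lt (by omega)

theorem orderTop_iota {f : K[X]} (hf : f ≠ 0) :
    (iota f).orderTop = ((-f.natDegree : ℤ) : WithTop ℤ) :=
  le_antisymm
    (HahnSeries.orderTop_le_of_coeff_ne_zero <| by
      rw [coeff_iota_neg_natCast]; exact leadingCoeff_ne_zero.mpr hf)
    (neg_natDegree_le_orderTop_iota f)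

theorem eq_zero_of_pos_orderTop_iota {f : K[X]} (h : 0 < (iota f).orderTop) : f = 0 := by
  by_contra hf
  rw [orderTop_iota hf] at h
  have : (0 : ℤ) < -(f.natDegree : ℤ) := by exact_mod_cast h
  omega

theorem lt_orderTop_iota_mul {f : K[X]} {x : LaurentSeries K} {n : ℤ}
    (h : ((f.natDegree + n : ℤ) : WithTop ℤ) < x.orderTop) :
    (n : WithTop ℤ) < (iota f * x).orderTop := by
  refine lt_of_lt_of_le ?_ (HahnSeries.orderTop_add_le_mul.trans' <|
    add_le_add_left (neg_natDegree_le_orderTop_iota f) _)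
  cases hx : x.orderTop with
  | top => simp
  | coe m =>
    rw [hx] at h
    have h : (f.natDegree : ℤ) + n < m := by exact_mod_cast h
    exact_mod_cast (by omega : n < -(f.natDegree : ℤ) + m)

theorem iota_mul_sub_mul_eq (α : LaurentSeries K) (p q p' q' : K[X]) :
    iota (p' * q - p * q') =
      iota q * (iota p' - α * iota q') - iota q' * (iota p - α * iota q) := by
  simp only [map_sub, map_mul]
  ring

theorem mul_eq_mul_of_natDegree_lt_orderTop {α : LaurentSeries K} {p q p' q' : K[X]}
    (h : (q'.natDegree : WithTop ℤ) < (iota p - α * iota q).orderTop)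
    (h' : (q.natDegree : WithTop ℤ) < (iota p' - α * iota q').orderTop) :
    p' * q = p * q' := by
  have hpos : 0 < (iota (p' * q - p * q')).orderTop := by
    rw [iota_mul_sub_mul_eq α]
    refine lt_of_lt_of_le (lt_min ?_ ?_) HahnSeries.min_orderTop_le_orderTop_sub <;>
      exact_mod_cast lt_orderTop_iota_mul (n := 0) (by simpa)
  exact sub_eq_zero.mp (eq_zero_of_pos_orderTop_iota hpos)

end

theorem best_approximation_of_common_factor_general {K : Type*} [Field K]
    (α : LaurentSeries K) (p q r : Polynomial K)
    (h : ((r.natDegree + q.natDegree : ℕ) : WithTop ℤ) < (iota p - α * iota q).orderTop) :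
    ∀ p' q' : Polynomial K, q' ≠ 0 →
      (iota (r * p) - α * iota (r * q)).orderTop ≤ (iota p' - α * iota q').orderTop →
      q'.natDegree ≤ (r * q).natDegree →
      p' * (r * q) = (r * p) * q' := by
  intro p' q' _ hord hdeg
  have hfactor : iota (r * p) - α * iota (r * q) = iota r * (iota p - α * iota q) := by
    simp only [map_mul]; ring
  have hE' : (q.natDegree : WithTop ℤ) < (iota p' - α * iota q').orderTop :=
    (lt_orderTop_iota_mul (by exact_mod_cast h)).trans_le (hfactor ▸ hord)
  have hE : (q'.natDegree : WithTop ℤ) < (iota p - α * iota q).orderTop :=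
    lt_of_le_of_lt (by exact_mod_cast hdeg.trans natDegree_mul_le) h
  rw [mul_left_comm, mul_eq_mul_of_natDegree_lt_orderTop hE hE', mul_assoc]

/-- If `orderTop (ι p - α ι q) > deg r + deg q` then `(r p, r q)` is a best approximation
of `α`; in particular (with `r = 1`) every convergent is a best approximation. -/
theorem best_approximation_of_common_factor {K : Type*} [Field K]
    (α : LaurentSeries K) (p q r : Polynomial K) (hq : q ≠ 0) (hr : r ≠ 0)
    (h : ((r.natDegree + q.natDegree : ℕ) : WithTop ℤ) < (iota p - α * iota q).orderTop) :
    ∀ p' q' : Polynomial K, q' ≠ 0 →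
      (iota (r * p) - α * iota (r * q)).orderTop ≤ (iota p' - α * iota q').orderTop →
      q'.natDegree ≤ (r * q).natDegree →
      p' * (r * q) = (r * p) * q' :=
  best_approximation_of_common_factor_general α p q r h
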